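/- arXiv:2205.00482 — 2 statements merged into one kernel-verified Lean document; each statement's English description precedes it below -/
import Mathlib

section
/- Let n ∈ ℤ and δ₁, δ₂, ε ∈ {1, −1}, and suppose (x, y) ∈ S^{δ₂,δ₁}_{n,ε}. Then there is a finite sequence of mutations, each step replacing a pair by one of its two mutations, which transforms (x, y) into a pair (x′, y′) ∈ S^{δ₂,δ₁}_{n,ε} such that |x′y′| equals the minimum of |ab| over all (a, b) ∈ S^{δ₂,δ₁}_{n,ε}. -/
/-!
`x` and its mutation `x̂ = -x - nδ₂y` are the two roots of `δ₂t² + nyt + (δ₁y² - ε)` and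
`x̂ ≡ -x (mod n)`, so mutations preserve `S`, and by Vieta `δ₂ x x̂ = δ₁y² - ε`. Hence if `0 < |y| < |x|` then
`|x x̂| ≤ y² + 1 < x²`, and mutating the larger coordinate strictly decreases `|xy|`. If `|x| = |y|`
then `x² ∣ ε`, so `|xy| = 1`; this is not minimal only if some pair of `S` has a zero coordinate,
which forces `n = ±1`, and then the equation makes one mutation vanish. Descending along `|xy|`
therefore ends at a minimiser.
-/

/-- The set `S^{δ₂,δ₁}_{n,ε}` of pairs `(x,y) ∈ ℤ²` with `δ₂x² + δ₁y² + nxy = ε`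
and `gcd(x,n) = gcd(y,n) = 1`. -/
def Sset (n δ₂ δ₁ ε : ℤ) : Set (ℤ × ℤ) :=
  {p | δ₂ * p.1 ^ 2 + δ₁ * p.2 ^ 2 + n * p.1 * p.2 = ε ∧
    Int.gcd p.1 n = 1 ∧ Int.gcd p.2 n = 1}

/-- One mutation step: replace `(x,y)` by `(-x - nδ₂y, y)` or by `(x, -y - nδ₁x)`. -/
def MutStep (n δ₂ δ₁ : ℤ) (p q : ℤ × ℤ) : Prop :=
  q = (-p.1 - n * δ₂ * p.2, p.2) ∨ q = (p.1, -p.2 - n * δ₁ * p.1)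

open Relation

theorem Relation.exists_reflTransGen_isMinOn {α β : Type*} [LinearOrder β] [WellFoundedLT β]
    {r : α → α → Prop} {s : Set α} {f : α → β} (hr : ∀ ⦃a b⦄, r a b → a ∈ s → b ∈ s)
    (hdesc : ∀ a ∈ s, ∀ b ∈ s, f b < f a → ∃ c, r a c ∧ f c < f a) {a : α} (ha : a ∈ s) :
    ∃ b, ReflTransGen r a b ∧ b ∈ s ∧ IsMinOn f s b := by
  induction a using (wellFounded_lt.onFun (f := f)).induction with
  | _ a ih =>
  by_cases hmin : IsMinOn f s a
  · exact ⟨a, .refl, ha, hmin⟩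
  simp only [isMinOn_iff, not_forall, not_le] at hmin
  obtain ⟨b, hb, hba⟩ := hmin
  obtain ⟨c, hac, hca⟩ := hdesc a ha b hb hba
  obtain ⟨d, hcd, hd, hdmin⟩ := ih c hca (hr hac ha)
  exact ⟨d, .head hac hcd, hd, hdmin⟩

section Mutation

variable {n δ₁ δ₂ ε x y : ℤ}

theorem swap_mem_Sset {p : ℤ × ℤ} (hp : p ∈ Sset n δ₂ δ₁ ε) : p.swap ∈ Sset n δ₁ δ₂ ε :=
  ⟨by simp only [Prod.fst_swap, Prod.snd_swap]; linear_combination hp.1, hp.2.2, hp.2.1⟩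

theorem MutStep.swap {p q : ℤ × ℤ} (h : MutStep n δ₂ δ₁ p q) :
    MutStep n δ₁ δ₂ p.swap q.swap := by
  rcases h with rfl | rfl
  exacts [Or.inr rfl, Or.inl rfl]

theorem mul_mutFst_eq (hδ₂ : δ₂ = 1 ∨ δ₂ = -1) (h : δ₂ * x ^ 2 + δ₁ * y ^ 2 + n * x * y = ε) :
    δ₂ * (x * (-x - n * δ₂ * y)) = δ₁ * y ^ 2 - ε := by
  rcases hδ₂ with rfl | rfl <;> linear_combination -h

theorem mutFst_mem_Sset (hδ₂ : δ₂ = 1 ∨ δ₂ = -1) (h : (x, y) ∈ Sset n δ₂ δ₁ ε) :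
    (-x - n * δ₂ * y, y) ∈ Sset n δ₂ δ₁ ε := by
  obtain ⟨heq, hx, hy⟩ := h
  refine ⟨by rcases hδ₂ with rfl | rfl <;> linear_combination heq, ?_, hy⟩
  rw [← Int.isCoprime_iff_gcd_eq_one] at hx ⊢
  simpa [sub_eq_add_neg, mul_assoc] using hx.neg_left.add_mul_left_left (-(δ₂ * y))

theorem MutStep.mem_Sset (hδ₁ : δ₁ = 1 ∨ δ₁ = -1) (hδ₂ : δ₂ = 1 ∨ δ₂ = -1) {p q : ℤ × ℤ}
    (hpq : MutStep n δ₂ δ₁ p q) (hp : p ∈ Sset n δ₂ δ₁ ε) : q ∈ Sset n δ₂ δ₁ ε := by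
  rcases hpq with rfl | rfl
  · exact mutFst_mem_Sset hδ₂ hp
  · exact swap_mem_Sset (mutFst_mem_Sset hδ₁ (swap_mem_Sset hp))

theorem abs_mutFst_lt (hδ₁ : δ₁ = 1 ∨ δ₁ = -1) (hδ₂ : δ₂ = 1 ∨ δ₂ = -1) (hε : ε = 1 ∨ ε = -1)
    (h : δ₂ * x ^ 2 + δ₁ * y ^ 2 + n * x * y = ε) (hy : y ≠ 0) (hyx : |y| < |x|) :
    |-x - n * δ₂ * y| < |x| := by
  have hprod : |x| * |-x - n * δ₂ * y| = |δ₁ * y ^ 2 - ε| := by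
    rw [← mul_mutFst_eq hδ₂ h, abs_mul δ₂, abs_mul]
    rcases hδ₂ with rfl | rfl <;> simp
  have hbound : |δ₁ * y ^ 2 - ε| ≤ |y| ^ 2 + 1 := by
    rcases hδ₁ with rfl | rfl <;> rcases hε with rfl | rfl <;> rw [abs_le] <;>
      constructor <;> nlinarith [sq_abs y]
  have hy1 : 1 ≤ |y| := Int.one_le_abs hy
  exact lt_of_mul_lt_mul_left (by nlinarith) (abs_nonneg x)

theorem sq_eq_one_of_abs_eq (hε : ε = 1 ∨ ε = -1)
    (h : δ₂ * x ^ 2 + δ₁ * y ^ 2 + n * x * y = ε) (hxy : |x| = |y|) : x ^ 2 = 1 := by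
  have hdvd : x ^ 2 ∣ ε := by
    rcases abs_eq_abs.mp hxy.symm with rfl | rfl
    · exact ⟨δ₂ + δ₁ + n, by linear_combination -h⟩
    · exact ⟨δ₂ + δ₁ - n, by linear_combination -h⟩
  exact Int.eq_one_of_dvd_one (sq_nonneg x) (hdvd.trans (by rcases hε with rfl | rfl <;> norm_num))

theorem natAbs_eq_one_of_mem_Sset_of_mul_eq_zero {q : ℤ × ℤ} (hq : q ∈ Sset n δ₂ δ₁ ε)
    (h : q.1 * q.2 = 0) : n.natAbs = 1 := by
  obtain ⟨-, h₁, h₂⟩ := hq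
  rcases mul_eq_zero.mp h with h | h <;> simp_all

theorem mutFst_eq_zero (hδ₂ : δ₂ = 1 ∨ δ₂ = -1) (h : δ₂ * x ^ 2 + δ₁ * y ^ 2 + n * x * y = ε)
    (hx : x ≠ 0) (hy : y ^ 2 = 1) (hδ₁ : δ₁ = ε) : -x - n * δ₂ * y = 0 := by
  have := mul_mutFst_eq hδ₂ h
  rw [hy, hδ₁, mul_one, sub_self] at this
  rcases hδ₂ with rfl | rfl <;> simpa [hx] using this

theorem mutFst_eq_zero_or_mutSnd_eq_zero (hδ₁ : δ₁ = 1 ∨ δ₁ = -1) (hδ₂ : δ₂ = 1 ∨ δ₂ = -1)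
    (hε : ε = 1 ∨ ε = -1) (h : δ₂ * x ^ 2 + δ₁ * y ^ 2 + n * x * y = ε) (hxy : |x| = |y|)
    (hn : n.natAbs = 1) : -x - n * δ₂ * y = 0 ∨ -y - n * δ₁ * x = 0 := by
  have h' : δ₁ * y ^ 2 + δ₂ * x ^ 2 + n * y * x = ε := by linear_combination h
  have hx := sq_eq_one_of_abs_eq hε h hxy
  have hy := sq_eq_one_of_abs_eq hε h' hxy.symm
  by_cases h₁ : δ₁ = ε
  · exact .inl (mutFst_eq_zero hδ₂ h (by rintro rfl; simp at hx) hy h₁)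
  by_cases h₂ : δ₂ = ε
  · exact .inr (mutFst_eq_zero hδ₁ h' (by rintro rfl; simp at hy) hx h₂)
  -- Otherwise `δ₁ = δ₂ = -ε` and the equation reads `nxy = 3ε`, whereas `|nxy| = 1`.
  have hnxy : (n * x * y) ^ 2 = 1 := by
    rw [mul_pow, mul_pow, hx, hy, ← Int.natAbs_sq, hn]; norm_num
  rcases hδ₁ with rfl | rfl <;> rcases hδ₂ with rfl | rfl <;> rcases hε with rfl | rfl <;>
    simp only [not_true, reduceCtorEq] at h₁ h₂ <;> nlinarith

theorem exists_mutStep_abs_mul_lt_of_abs_le (hδ₁ : δ₁ = 1 ∨ δ₁ = -1) (hδ₂ : δ₂ = 1 ∨ δ₂ = -1)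
    (hε : ε = 1 ∨ ε = -1) (hp : (x, y) ∈ Sset n δ₂ δ₁ ε) {q : ℤ × ℤ} (hq : q ∈ Sset n δ₂ δ₁ ε)
    (hlt : |q.1 * q.2| < |x * y|) (hyx : |y| ≤ |x|) :
    ∃ c, MutStep n δ₂ δ₁ (x, y) c ∧ |c.1 * c.2| < |x * y| := by
  have hxy0 : x * y ≠ 0 := by
    rintro h
    rw [h, abs_zero] at hlt
    exact (abs_nonneg _).not_gt hlt
  have hy : y ≠ 0 := right_ne_zero_of_mul hxy0
  rcases hyx.lt_or_eq with hyx | hyx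
  · refine ⟨_, .inl rfl, ?_⟩
    simp only [abs_mul]
    exact mul_lt_mul_of_pos_right (abs_mutFst_lt hδ₁ hδ₂ hε hp.1 hy hyx) (abs_pos.mpr hy)
  have hq0 : q.1 * q.2 = 0 := by
    have hx : x ^ 2 = 1 := sq_eq_one_of_abs_eq hε hp.1 hyx.symm
    rw [abs_mul x y, hyx, ← sq, sq_abs, hx] at hlt
    exact Int.abs_lt_one_iff.mp hlt
  have hpos : 0 < |x * y| := abs_pos.mpr hxy0
  rcases mutFst_eq_zero_or_mutSnd_eq_zero hδ₁ hδ₂ hε hp.1 hyx.symm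
      (natAbs_eq_one_of_mem_Sset_of_mul_eq_zero hq hq0) with h | h
  · exact ⟨_, .inl rfl, by simpa [h] using hpos⟩
  · exact ⟨_, .inr rfl, by simpa [h] using hpos⟩

theorem exists_mutStep_abs_mul_lt (hδ₁ : δ₁ = 1 ∨ δ₁ = -1) (hδ₂ : δ₂ = 1 ∨ δ₂ = -1)
    (hε : ε = 1 ∨ ε = -1) {p q : ℤ × ℤ} (hp : p ∈ Sset n δ₂ δ₁ ε) (hq : q ∈ Sset n δ₂ δ₁ ε)
    (hlt : |q.1 * q.2| < |p.1 * p.2|) :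
    ∃ c, MutStep n δ₂ δ₁ p c ∧ |c.1 * c.2| < |p.1 * p.2| := by
  obtain ⟨x, y⟩ := p
  rcases le_total |y| |x| with hyx | hxy
  · exact exists_mutStep_abs_mul_lt_of_abs_le hδ₁ hδ₂ hε hp hq hlt hyx
  obtain ⟨c, hc, hclt⟩ := exists_mutStep_abs_mul_lt_of_abs_le hδ₂ hδ₁ hε (swap_mem_Sset hp)
    (swap_mem_Sset hq) (by simpa [mul_comm] using hlt) hxy
  exact ⟨c.swap, hc.swap, by simpa [mul_comm] using hclt⟩

end Mutation

/-- a finite sequence of mutations transforms any `(x,y) ∈ S^{δ₂,δ₁}_{n,ε}`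
into a pair of `S^{δ₂,δ₁}_{n,ε}` realizing the minimum of `|ab|` over the set. -/
theorem stmt_4 (n δ₁ δ₂ ε x y : ℤ)
    (hδ₁ : δ₁ = 1 ∨ δ₁ = -1) (hδ₂ : δ₂ = 1 ∨ δ₂ = -1) (hε : ε = 1 ∨ ε = -1)
    (hxy : (x, y) ∈ Sset n δ₂ δ₁ ε) :
    ∃ p' : ℤ × ℤ, Relation.ReflTransGen (MutStep n δ₂ δ₁) (x, y) p' ∧
      p' ∈ Sset n δ₂ δ₁ ε ∧
      ∀ q ∈ Sset n δ₂ δ₁ ε, |p'.1 * p'.2| ≤ |q.1 * q.2| := by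
  obtain ⟨p, hxyp, hp, hmin⟩ := Relation.exists_reflTransGen_isMinOn
    (f := fun p : ℤ × ℤ ↦ (p.1 * p.2).natAbs) (fun _ _ ↦ MutStep.mem_Sset hδ₁ hδ₂)
    (fun a ha b hb hba ↦ by
      zify at hba ⊢
      exact exists_mutStep_abs_mul_lt hδ₁ hδ₂ hε ha hb hba)
    hxy
  refine ⟨p, hxyp, hp, fun q hq ↦ ?_⟩
  have hle := isMinOn_iff.mp hmin q hq
  zify at hle
  exact hle
end

section
/- The set of pairs (x, y) ∈ ℤ² satisfying x² − y² + xy = −1 is exactly { ±(F_{2k}, F_{2k+1}) : k ≥ 0 } ∪ { ±(−F_{2k+2}, F_{2k+1}) : k ≥ 0 }. -/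
/-!
The form `Q(x, y) = x² - y² + xy` changes sign under `(x, y) ↦ (y, x + y)`, so by Cassini's
identity it takes the value `-(-1)ⁿ` at consecutive Fibonacci numbers `(F_n, F_{n+1})`.
Conversely, a solution of `Q(a, b) = ±1` with `0 ≤ a`, `0 < b` descends to the smaller solution
`(b - a, a)` unless `a = 0` or `a = b = 1`, so it is a pair of consecutive Fibonacci numbers, and
the sign `-1` forces an even index. The remaining solutions of `Q = -1` come from the symmetries
`(x, y) ↦ (-x, -y)` and `(x, y) ↦ (-x - y, y)` of `Q`.
-/

open Int

def fibForm (x y : ℤ) : ℤ := x ^ 2 - y ^ 2 + x * y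

theorem fibForm_neg (x y : ℤ) : fibForm (-x) (-y) = fibForm x y := by
  unfold fibForm; ring

theorem fibForm_neg_sub (x y : ℤ) : fibForm (-x - y) y = fibForm x y := by
  unfold fibForm; ring

theorem fibForm_add (x y : ℤ) : fibForm y (x + y) = -fibForm x y := by
  unfold fibForm; ring

theorem fibForm_fib (n : ℤ) : fibForm (fib n) (fib (n + 1)) = -(-1) ^ n.natAbs := by
  have hpred : fib (n + 1) = fib (n - 1) + fib n := by
    simpa [sub_add_cancel, sub_add] using fib_add_two (n - 1)
  rw [← fib_succ_mul_fib_pred_sub_fib_sq, fibForm]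
  linear_combination (-fib (n + 1)) * hpred

theorem fibForm_fib_two_mul (k : ℤ) : fibForm (fib (2 * k)) (fib (2 * k + 1)) = -1 := by
  rw [fibForm_fib, Even.neg_one_pow (natAbs_even.mpr (even_two_mul k))]

theorem exists_fib_eq_of_fibForm_sq_eq_one {a b : ℤ} (ha : 0 ≤ a) (hb : 0 < b)
    (h : fibForm a b ^ 2 = 1) : ∃ n : ℕ, a = fib n ∧ b = fib (n + 1) := by
  have hQ : fibForm a b = 1 ∨ fibForm a b = -1 := sq_eq_one_iff.mp h
  rcases ha.eq_or_lt with rfl | ha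
  · refine ⟨0, rfl, ?_⟩
    simp only [fibForm] at hQ
    rw [Nat.cast_zero, zero_add, fib_one]
    rcases hQ with hQ | hQ <;> nlinarith
  rcases lt_or_ge a b with hab | hba
  · have hdesc : fibForm (b - a) a ^ 2 = 1 := by
      rw [← h, ← neg_sq, ← fibForm_add, sub_add_cancel]
    obtain ⟨n, h₁, h₂⟩ := exists_fib_eq_of_fibForm_sq_eq_one (by omega) ha hdesc
    refine ⟨n + 1, h₂, ?_⟩
    rw [Nat.cast_add_one, add_assoc, one_add_one_eq_two, fib_add_two, ← h₁, ← h₂, sub_add_cancel]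
  · have hge : a ^ 2 ≤ fibForm a b := by unfold fibForm; nlinarith
    have hQ1 : fibForm a b = 1 := hQ.resolve_right (by nlinarith)
    have ha1 : a = 1 := by nlinarith
    have hb1 : b = 1 := by omega
    exact ⟨1, by simp [ha1], by simp [hb1]⟩
termination_by b.toNat
decreasing_by omega

theorem exists_fib_two_mul_of_fibForm_eq_neg_one {x y : ℤ} (hx : 0 ≤ x) (hy : 0 < y)
    (h : fibForm x y = -1) : ∃ k : ℕ, x = fib (2 * k) ∧ y = fib (2 * k + 1) := by
  obtain ⟨n, rfl, rfl⟩ := exists_fib_eq_of_fibForm_sq_eq_one hx hy (by rw [h]; norm_num)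
  have heven : Even n := by
    rw [fibForm_fib, neg_inj, natAbs_natCast] at h
    exact (neg_one_pow_eq_one_iff_even (by norm_num)).mp h
  obtain ⟨k, rfl⟩ := heven
  exact ⟨k, by push_cast; ring_nf, by push_cast; ring_nf⟩

theorem exists_fib_of_fibForm_eq_neg_one {x y : ℤ} (hy : 0 < y) (h : fibForm x y = -1) :
    ∃ k : ℕ, (x, y) = (fib (2 * k), fib (2 * k + 1)) ∨
      (x, y) = (-fib (2 * k + 2), fib (2 * k + 1)) := by
  rcases le_or_gt 0 x with hx | hx
  · obtain ⟨k, rfl, rfl⟩ := exists_fib_two_mul_of_fibForm_eq_neg_one hx hy h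
    exact ⟨k, Or.inl rfl⟩
  · -- `x < 0 < x + y` would give `Q(x, y) = x (x + y) - y² ≤ -2`
    have hx' : 0 ≤ -x - y := by unfold fibForm at h; nlinarith
    obtain ⟨k, h₁, rfl⟩ :=
      exists_fib_two_mul_of_fibForm_eq_neg_one hx' hy (by rw [fibForm_neg_sub, h])
    refine ⟨k, Or.inr ?_⟩
    rw [fib_add_two, ← h₁]
    simp

theorem fibForm_eq_neg_one_iff {x y : ℤ} :
    fibForm x y = -1 ↔ ∃ k : ℕ,
      (x, y) = (fib (2 * k), fib (2 * k + 1)) ∨ (x, y) = -(fib (2 * k), fib (2 * k + 1)) ∨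
      (x, y) = (-fib (2 * k + 2), fib (2 * k + 1)) ∨
      (x, y) = -(-fib (2 * k + 2), fib (2 * k + 1)) := by
  constructor
  · intro h
    rcases lt_trichotomy y 0 with hy | rfl | hy
    · obtain ⟨k, hk⟩ := exists_fib_of_fibForm_eq_neg_one (neg_pos.mpr hy) (by rwa [fibForm_neg])
      refine ⟨k, ?_⟩
      rcases hk with hk | hk
      · exact Or.inr (Or.inl (by rw [← hk, Prod.neg_mk, neg_neg, neg_neg]))
      · exact Or.inr (Or.inr (Or.inr (by rw [← hk, Prod.neg_mk, neg_neg, neg_neg])))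
    · unfold fibForm at h; nlinarith
    · obtain ⟨k, hk | hk⟩ := exists_fib_of_fibForm_eq_neg_one hy h
      · exact ⟨k, Or.inl hk⟩
      · exact ⟨k, Or.inr (Or.inr (Or.inl hk))⟩
  · rintro ⟨k, h | h | h | h⟩ <;> simp only [Prod.ext_iff, Prod.fst_neg, Prod.snd_neg] at h <;>
      obtain ⟨rfl, rfl⟩ := h
    · exact fibForm_fib_two_mul k
    · rw [fibForm_neg, fibForm_fib_two_mul]
    · rw [fib_add_two, neg_add', fibForm_neg_sub, fibForm_fib_two_mul]
    · rw [fibForm_neg, fib_add_two, neg_add', fibForm_neg_sub, fibForm_fib_two_mul]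

theorem eq_fib_of_recurrence (F : ℤ → ℤ) (hFneg1 : F (-1) = 1) (hF0 : F 0 = 0)
    (hFrec : ∀ m : ℤ, F (m + 1) = F m + F (m - 1)) : F = fib := by
  have hfib (m : ℤ) : fib (m + 1) = fib m + fib (m - 1) := by
    simpa [add_comm, sub_add_cancel, sub_add] using fib_add_two (m - 1)
  suffices h : ∀ n : ℤ, F n = fib n ∧ F (n - 1) = fib (n - 1) from funext fun n ↦ (h n).1
  intro n
  induction n using Int.induction_on with
  | zero => simp [hF0, hFneg1]
  | succ i ih => exact ⟨by rw [hFrec, hfib, ih.1, ih.2], by rw [add_sub_cancel_right, ih.1]⟩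
  | pred i ih =>
    refine ⟨ih.2, ?_⟩
    have hF := hFrec (-i - 1)
    have hf := hfib (-i - 1)
    rw [sub_add_cancel] at hF hf
    linear_combination -hF + hf + ih.1 - ih.2

/-- the pairs `(x,y) ∈ ℤ²` with `x² - y² + xy = -1` are exactly
`±(F_{2k}, F_{2k+1})` and `±(-F_{2k+2}, F_{2k+1})` for `k ≥ 0`, where `F` is the
Fibonacci sequence extended to all integer indices. -/
theorem stmt_14 (F : ℤ → ℤ) (hFneg1 : F (-1) = 1) (hF0 : F 0 = 0)
    (hFrec : ∀ m : ℤ, F (m + 1) = F m + F (m - 1)) :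
    {p : ℤ × ℤ | p.1 ^ 2 - p.2 ^ 2 + p.1 * p.2 = -1} =
      {p : ℤ × ℤ | ∃ k : ℕ,
        p = (F (2 * k), F (2 * k + 1)) ∨ p = -(F (2 * k), F (2 * k + 1)) ∨
        p = (-F (2 * k + 2), F (2 * k + 1)) ∨ p = -(-F (2 * k + 2), F (2 * k + 1))} := by
  obtain rfl := eq_fib_of_recurrence F hFneg1 hF0 hFrec
  ext ⟨x, y⟩
  exact fibForm_eq_neg_one_iff
end
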